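/- Let W' ⊆ H_ℂ be a ℂ-subspace with H_ℂ = W' ⊕ σ(W') such that left multiplication is a morphism of Hodge structures, i.e., setting W'^{1,0} := W', W'^{0,1} := σ(W') and W'^{r,s} := 0 for all other pairs (r,s), one has H^{p,q}·W'^{r,s} ⊆ W'^{p+r-1, q+s-1} for all (p,q) with p+q = 2 and all (r,s) with r+s = 1. Then W ⊆ W'. If moreover H_ℂ = W ⊕ σ(W), then W' = W. -/
import Mathlib


open scoped TensorProduct

noncomputable section

/-- Complex conjugation on `ℂ` as a `ℚ`-algebra homomorphism. -/
def conjQAlg : ℂ →ₐ[ℚ] ℂ := (Complex.conjAe.restrictScalars ℚ).toAlgHom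

variable (H : Type) [Ring H] [Algebra ℚ H] [FiniteDimensional ℚ H]

/-- The conjugate-linear involution of `H_ℂ = ℂ ⊗[ℚ] H` fixing `H`. -/
def sigmaC : ℂ ⊗[ℚ] H →ₗ[ℚ] ℂ ⊗[ℚ] H :=
  (Algebra.TensorProduct.map conjQAlg (AlgHom.id ℚ H)).toLinearMap

/-- The inclusion of `H` into `H_ℂ = ℂ ⊗[ℚ] H`. -/
def inclH : H →ₐ[ℚ] ℂ ⊗[ℚ] H := Algebra.TensorProduct.includeRight

/-- The data of a polarized weight 2 Hodge structure on a finite-dimensional `ℚ`-algebra `H`,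
compatible with the ring structure:
(i) a Hodge decomposition `H_ℂ = H^{2,0} ⊕ H^{1,1} ⊕ H^{0,2}` with `σ(H^{2,0}) = H^{0,2}`,
`σ(H^{1,1}) = H^{1,1}`;
(ii) a polarization: a symmetric `ℚ`-bilinear form `B` on `H` with `ℂ`-bilinear extension `BC`
to `H_ℂ`, whose associated Hermitian pairing `h(α,β) := BC α (σ β)` makes the Hodge pieces
pairwise orthogonal and is positive definite on `H^{2,0}`, `H^{0,2}` and negative definite on
`H^{1,1}`;
(iii) the product is a morphism of Hodge structures of bidegree `(-1,-1)`:
`H^{p,q}·H^{p',q'} ⊆ H^{p+p'-1,q+q'-1}`;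
(iv) an adjunction `t`: a `ℚ`-linear involution with `t(ab) = t(b)t(a)`,
`⟨ab,c⟩ = ⟨b, t(a)c⟩` and `⟨ab,c⟩ = ⟨a, c·t(b)⟩`. -/
structure HodgeAlgebraData where
  H20 : Submodule ℂ (ℂ ⊗[ℚ] H)
  H11 : Submodule ℂ (ℂ ⊗[ℚ] H)
  H02 : Submodule ℂ (ℂ ⊗[ℚ] H)
  sup_top : H20 ⊔ H11 ⊔ H02 = ⊤
  disj1 : H20 ⊓ (H11 ⊔ H02) = ⊥
  disj2 : H11 ⊓ H02 = ⊥
  sigma_20 : ∀ x ∈ H20, sigmaC H x ∈ H02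
  sigma_02 : ∀ x ∈ H02, sigmaC H x ∈ H20
  sigma_11 : ∀ x ∈ H11, sigmaC H x ∈ H11
  B : H →ₗ[ℚ] H →ₗ[ℚ] ℚ
  B_symm : ∀ a b : H, B a b = B b a
  BC : (ℂ ⊗[ℚ] H) →ₗ[ℂ] (ℂ ⊗[ℚ] H) →ₗ[ℂ] ℂ
  BC_extends : ∀ a b : H, BC (inclH H a) (inclH H b) = (B a b : ℂ)
  BC_symm : ∀ x y, BC x y = BC y x
  BC_conj : ∀ x y, BC (sigmaC H x) (sigmaC H y) = starRingEnd ℂ (BC x y)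
  orth_20_11 : ∀ x ∈ H20, ∀ y ∈ H11, BC x (sigmaC H y) = 0
  orth_20_02 : ∀ x ∈ H20, ∀ y ∈ H02, BC x (sigmaC H y) = 0
  orth_11_02 : ∀ x ∈ H11, ∀ y ∈ H02, BC x (sigmaC H y) = 0
  pos_20 : ∀ x ∈ H20, x ≠ 0 → 0 < (BC x (sigmaC H x)).re ∧ (BC x (sigmaC H x)).im = 0
  pos_02 : ∀ x ∈ H02, x ≠ 0 → 0 < (BC x (sigmaC H x)).re ∧ (BC x (sigmaC H x)).im = 0
  neg_11 : ∀ x ∈ H11, x ≠ 0 → (BC x (sigmaC H x)).re < 0 ∧ (BC x (sigmaC H x)).im = 0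
  mul_20_20 : ∀ x ∈ H20, ∀ y ∈ H20, x * y = 0
  mul_20_11 : ∀ x ∈ H20, ∀ y ∈ H11, x * y ∈ H20
  mul_11_20 : ∀ x ∈ H11, ∀ y ∈ H20, x * y ∈ H20
  mul_11_11 : ∀ x ∈ H11, ∀ y ∈ H11, x * y ∈ H11
  mul_20_02 : ∀ x ∈ H20, ∀ y ∈ H02, x * y ∈ H11
  mul_02_20 : ∀ x ∈ H02, ∀ y ∈ H20, x * y ∈ H11
  mul_02_02 : ∀ x ∈ H02, ∀ y ∈ H02, x * y = 0
  mul_11_02 : ∀ x ∈ H11, ∀ y ∈ H02, x * y ∈ H02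
  mul_02_11 : ∀ x ∈ H02, ∀ y ∈ H11, x * y ∈ H02
  t : H →ₗ[ℚ] H
  t_invol : ∀ a : H, t (t a) = a
  t_mul : ∀ a b : H, t (a * b) = t b * t a
  adj_left : ∀ a b c : H, B (a * b) c = B b (t a * c)
  adj_right : ∀ a b c : H, B (a * b) c = B a (c * t b)

variable {H}

/-- `W := H^{2,0}·H_ℂ`, the `ℂ`-linear span of all products `x·y` with `x ∈ H^{2,0}`,
`y ∈ H_ℂ`. -/
def HodgeAlgebraData.W (D : HodgeAlgebraData H) : Submodule ℂ (ℂ ⊗[ℚ] H) := D.H20 * ⊤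

/-- `σ(W)`, the image of `W` under the conjugation `σ`, as a `ℚ`-subspace of `H_ℂ`. -/
def HodgeAlgebraData.sigmaW (D : HodgeAlgebraData H) : Submodule ℚ (ℂ ⊗[ℚ] H) :=
  (D.W.restrictScalars ℚ).map (sigmaC H)

/-- The `ℂ`-linear extension of `t` to `H_ℂ`. -/
def HodgeAlgebraData.tC (D : HodgeAlgebraData H) : ℂ ⊗[ℚ] H →ₗ[ℂ] ℂ ⊗[ℚ] H :=
  LinearMap.baseChange ℂ D.t

/-- Let `W' ⊆ H_ℂ` be a `ℂ`-subspace with `H_ℂ = W' ⊕ σ(W')` such that left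
multiplication is a morphism of Hodge structures (`H^{p,q}·W'^{r,s} ⊆ W'^{p+r-1,q+s-1}`,
where `W'^{1,0} := W'`, `W'^{0,1} := σ(W')` and `W'^{r,s} := 0` otherwise). Then `W ⊆ W'`.
If moreover `H_ℂ = W ⊕ σ(W)`, then `W' = W`. -/
theorem W_minimal (D : HodgeAlgebraData H) (W' : Submodule ℂ (ℂ ⊗[ℚ] H))
    (hdisj : (W'.restrictScalars ℚ) ⊓ (W'.restrictScalars ℚ).map (sigmaC H) = ⊥)
    (hsup : (W'.restrictScalars ℚ) ⊔ (W'.restrictScalars ℚ).map (sigmaC H) = ⊤)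
    (h20_10 : ∀ x ∈ D.H20, ∀ w ∈ W', x * w = 0)
    (h20_01 : ∀ x ∈ D.H20, ∀ w ∈ (W'.restrictScalars ℚ).map (sigmaC H), x * w ∈ W')
    (h11_10 : ∀ x ∈ D.H11, ∀ w ∈ W', x * w ∈ W')
    (h11_01 : ∀ x ∈ D.H11, ∀ w ∈ (W'.restrictScalars ℚ).map (sigmaC H),
      x * w ∈ (W'.restrictScalars ℚ).map (sigmaC H))
    (h02_10 : ∀ x ∈ D.H02, ∀ w ∈ W', x * w ∈ (W'.restrictScalars ℚ).map (sigmaC H))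
    (h02_01 : ∀ x ∈ D.H02, ∀ w ∈ (W'.restrictScalars ℚ).map (sigmaC H), x * w = 0) :
    D.W ≤ W' ∧
    (((D.W.restrictScalars ℚ) ⊓ D.sigmaW = ⊥ ∧
      (D.W.restrictScalars ℚ) ⊔ D.sigmaW = ⊤) → W' = D.W) := by
  have hW : D.W ≤ W' := by
    rw [HodgeAlgebraData.W, Submodule.mul_le]
    intro x hx y _
    have hy : y ∈ (W'.restrictScalars ℚ) ⊔ (W'.restrictScalars ℚ).map (sigmaC H) := by
      rw [hsup]; trivial
    obtain ⟨a, ha, b, hb, rfl⟩ := Submodule.mem_sup.mp hy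
    have : x * (a + b) = x * a + x * b := mul_add x a b
    rw [this, h20_10 x hx a ha, zero_add]
    exact h20_01 x hx b hb
  refine ⟨hW, fun ⟨hd, hs⟩ => ?_⟩
  refine le_antisymm (fun w' hw' => ?_) hW
  have hw'top : w' ∈ (D.W.restrictScalars ℚ) ⊔ D.sigmaW := by rw [hs]; trivial
  obtain ⟨a, ha, b, hb, rfl⟩ := Submodule.mem_sup.mp hw'top
  have hb' : b ∈ (W'.restrictScalars ℚ) ⊓ (W'.restrictScalars ℚ).map (sigmaC H) := by
    constructor
    · have : b = (a + b) - a := (add_sub_cancel_left a b).symm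
      rw [this]
      exact Submodule.sub_mem _ hw' (hW ha)
    · rw [HodgeAlgebraData.sigmaW] at hb
      have hle : D.W.restrictScalars ℚ ≤ W'.restrictScalars ℚ := fun z hz => hW hz
      exact Submodule.map_mono hle hb
  rw [hdisj] at hb'
  simp only [Submodule.mem_bot] at hb'
  rw [hb', add_zero]
  exact ha
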